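/- Injectivity of joinability for type constructors: (1) if (m1 = n1) v (m2 = n2) then m1 v m2 and n1 v n2; (2) if (x:M1)->N1 v (x:M2)->N2 then M1 v M2 and N1 v N2; (3) if [x:M1]->N1 v [x:M2]->N2 then M1 v M2 and N1 v N2; (4) if D applied to arguments M_i is joinable with D applied to arguments M'_i, then each M_i v M'_i. -/

import Mathlib

namespace Trellys

/- Unannotated expressions (de Bruijn indices).  `rec'` binds one variable (the
recursive function `f`); `pi`/`ipi` bind one variable in the codomain; `lam` and
`ilam` bind one variable in the body; each `case` branch records its constructor
name, the number of pattern variables it binds, and its body. -/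
mutual
inductive Exp : Type where
  | star : Exp
  | var : Nat → Exp
  | rec' : Exp → Exp
  | abort : Exp
  | pi : Exp → Exp → Exp
  | lam : Exp → Exp
  | app : Exp → Exp → Exp
  | ipi : Exp → Exp → Exp
  | ilam : Exp → Exp
  | iapp : Exp → Exp
  | tcon : Nat → Exps → Exp
  | dcon : Nat → Exps → Exp
  | case' : Exp → Branches → Exp
  | eq : Exp → Exp → Exp
  | join : Exp

inductive Exps : Type where
  | nil : Exps
  | cons : Exp → Exps → Exps

inductive Branches : Type where
  | nil : Branches
  | cons : Nat → Nat → Exp → Branches → Branches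
end

/- Lifting (shifting) of de Bruijn indices `≥ k` by `d`. -/
mutual
def lift (d : Nat) : Nat → Exp → Exp
  | _, .star => .star
  | k, .var n => if n < k then .var n else .var (n + d)
  | k, .rec' u => .rec' (lift d (k+1) u)
  | _, .abort => .abort
  | k, .pi A B => .pi (lift d k A) (lift d (k+1) B)
  | k, .lam b => .lam (lift d (k+1) b)
  | k, .app a b => .app (lift d k a) (lift d k b)
  | k, .ipi A B => .ipi (lift d k A) (lift d (k+1) B)
  | k, .ilam b => .ilam (lift d (k+1) b)
  | k, .iapp a => .iapp (lift d k a)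
  | k, .tcon D as => .tcon D (liftExps d k as)
  | k, .dcon c as => .dcon c (liftExps d k as)
  | k, .case' s bs => .case' (lift d k s) (liftBranches d k bs)
  | k, .eq a b => .eq (lift d k a) (lift d k b)
  | _, .join => .join

def liftExps (d : Nat) : Nat → Exps → Exps
  | _, .nil => .nil
  | k, .cons a as => .cons (lift d k a) (liftExps d k as)

def liftBranches (d : Nat) : Nat → Branches → Branches
  | _, .nil => .nil
  | k, .cons c ar b bs => .cons c ar (lift d (k+ar) b) (liftBranches d k bs)
end

/- Capture-avoiding substitution `[u/x]m` of `u` for de Bruijn index `k`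
(the substituted term is lifted appropriately; higher indices are lowered). -/
mutual
def subst (u : Exp) : Nat → Exp → Exp
  | _, .star => .star
  | k, .var n => if n < k then .var n else if n = k then lift k 0 u else .var (n - 1)
  | k, .rec' b => .rec' (subst u (k+1) b)
  | _, .abort => .abort
  | k, .pi A B => .pi (subst u k A) (subst u (k+1) B)
  | k, .lam b => .lam (subst u (k+1) b)
  | k, .app a b => .app (subst u k a) (subst u k b)
  | k, .ipi A B => .ipi (subst u k A) (subst u (k+1) B)
  | k, .ilam b => .ilam (subst u (k+1) b)
  | k, .iapp a => .iapp (subst u k a)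
  | k, .tcon D as => .tcon D (substExps u k as)
  | k, .dcon c as => .dcon c (substExps u k as)
  | k, .case' s bs => .case' (subst u k s) (substBranches u k bs)
  | k, .eq a b => .eq (subst u k a) (subst u k b)
  | _, .join => .join

def substExps (u : Exp) : Nat → Exps → Exps
  | _, .nil => .nil
  | k, .cons a as => .cons (subst u k a) (substExps u k as)

def substBranches (u : Exp) : Nat → Branches → Branches
  | _, .nil => .nil
  | k, .cons c ar b bs => .cons c ar (subst u (k+ar) b) (substBranches u k bs)
end

/- Simultaneous substitution of a list of terms for the de Bruijn
indices `0, 1, …`. -/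
def msubst : Exps → Exp → Exp
  | .nil, m => m
  | .cons u us, m => msubst us (subst u 0 m)

def expsLength : Exps → Nat
  | .nil => 0
  | .cons _ as => expsLength as + 1

def expsGet : Exps → Nat → Option Exp
  | .nil, _ => none
  | .cons a _, 0 => some a
  | .cons _ as, n+1 => expsGet as n

def findBranch (d : Nat) : Branches → Option (Nat × Exp)
  | .nil => none
  | .cons c ar b bs => if c = d then some (ar, b) else findBranch d bs

/- Free (de Bruijn) variables. -/
mutual
def fvs : Exp → Set Nat
  | .star => ∅
  | .var n => {n}
  | .rec' b => {n | n+1 ∈ fvs b}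
  | .abort => ∅
  | .pi A B => fvs A ∪ {n | n+1 ∈ fvs B}
  | .lam b => {n | n+1 ∈ fvs b}
  | .app a b => fvs a ∪ fvs b
  | .ipi A B => fvs A ∪ {n | n+1 ∈ fvs B}
  | .ilam b => {n | n+1 ∈ fvs b}
  | .iapp a => fvs a
  | .tcon _ as => fvsExps as
  | .dcon _ as => fvsExps as
  | .case' s bs => fvs s ∪ fvsBranches bs
  | .eq a b => fvs a ∪ fvs b
  | .join => ∅

def fvsExps : Exps → Set Nat
  | .nil => ∅
  | .cons a as => fvs a ∪ fvsExps as

def fvsBranches : Branches → Set Nat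
  | .nil => ∅
  | .cons _ ar b bs => {n | n + ar ∈ fvs b} ∪ fvsBranches bs
end

/- Syntactic values (variables count as values). -/
mutual
inductive IsVal : Exp → Prop where
  | star : IsVal .star
  | var : IsVal (.var n)
  | rec' : IsVal u → IsVal (.rec' u)
  | pi : IsVal (.pi A B)
  | lam : IsVal (.lam b)
  | ipi : IsVal (.ipi A B)
  | ilam : IsVal (.ilam b)
  | tcon : IsVal (.tcon D as)
  | dcon : IsVals as → IsVal (.dcon d as)
  | eq : IsVal (.eq a b)
  | join : IsVal .join

inductive IsVals : Exps → Prop where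
  | nil : IsVals .nil
  | cons : IsVal a → IsVals as → IsVals (.cons a as)
end

/- A constructor-argument spine whose first non-value entry is `abort`. -/
inductive SpineAbort : Exps → Prop where
  | here : SpineAbort (.cons .abort as)
  | there : IsVal a → SpineAbort as → SpineAbort (.cons a as)

/- CBV parallel reduction `m ~>p m'`: reflexive, congruent (also under
binders), beta-steps restricted to value arguments / constructor-value
scrutinees, rec-unrolling, and abort propagation. -/
mutual
inductive Pstep : Exp → Exp → Prop where
  | refl : Pstep m m
  | rec' : Pstep u u' → Pstep (.rec' u) (.rec' u')
  | pi : Pstep A A' → Pstep B B' → Pstep (.pi A B) (.pi A' B')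
  | lam : Pstep b b' → Pstep (.lam b) (.lam b')
  | app : Pstep a a' → Pstep b b' → Pstep (.app a b) (.app a' b')
  | ipi : Pstep A A' → Pstep B B' → Pstep (.ipi A B) (.ipi A' B')
  | ilam : Pstep b b' → Pstep (.ilam b) (.ilam b')
  | iapp : Pstep a a' → Pstep (.iapp a) (.iapp a')
  | tcon : PstepExps as as' → Pstep (.tcon D as) (.tcon D as')
  | dcon : PstepExps as as' → Pstep (.dcon d as) (.dcon d as')
  | case' : Pstep s s' → PstepBranches bs bs' → Pstep (.case' s bs) (.case' s' bs')
  | eq : Pstep a a' → Pstep b b' → Pstep (.eq a b) (.eq a' b')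
  | appbeta : IsVal u → Pstep b b' → Pstep u u' →
      Pstep (.app (.lam b) u) (subst u' 0 b')
  | apprec : IsVal u₁ → IsVal u₂ → Pstep u₁ u₁' → Pstep u₂ u₂' →
      Pstep (.app (.rec' u₁) u₂) (.app (subst (.rec' u₁) 0 u₁') u₂')
  | iappbeta : Pstep b b' → Pstep (.iapp (.ilam b)) (subst .join 0 b')
  | iapprec : IsVal u → Pstep u u' →
      Pstep (.iapp (.rec' u)) (.iapp (subst (.rec' u) 0 u'))
  | casebeta : IsVals as → findBranch d bs = some (ar, b) → expsLength as = ar →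
      PstepExps as as' → Pstep b b' →
      Pstep (.case' (.dcon d as) bs) (msubst as' b')
  | abortAppL : Pstep (.app .abort b) .abort
  | abortAppR : IsVal u → Pstep (.app u .abort) .abort
  | abortIApp : Pstep (.iapp .abort) .abort
  | abortCase : Pstep (.case' .abort bs) .abort
  | abortDcon : SpineAbort as → Pstep (.dcon d as) .abort

inductive PstepExps : Exps → Exps → Prop where
  | nil : PstepExps .nil .nil
  | cons : Pstep a a' → PstepExps as as' → PstepExps (.cons a as) (.cons a' as')

inductive PstepBranches : Branches → Branches → Prop where
  | nil : PstepBranches .nil .nil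
  | cons : Pstep b b' → PstepBranches bs bs' →
      PstepBranches (.cons c ar b bs) (.cons c ar b' bs')
end

/- Reflexive-transitive closure `m ~>p* m'` of parallel reduction. -/
def Pmulti : Exp → Exp → Prop := Relation.ReflTransGen Pstep

/- Joinability: `m v n` iff `m` and `n` reduce to a common term. -/
def Joinable (m n : Exp) : Prop := ∃ p, Pmulti m p ∧ Pmulti n p

/- Head constructors. -/
inductive Hd : Type where
  | star : Hd
  | arrow : Hd
  | iarrow : Hd
  | tconH : Nat → Hd
  | dconH : Nat → Hd
  | eqH : Hd
  deriving DecidableEq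

/- The (partial) head-constructor function. -/
def hd : Exp → Option Hd
  | .star => some .star
  | .pi _ _ => some .arrow
  | .ipi _ _ => some .iarrow
  | .tcon D _ => some (.tconH D)
  | .dcon d _ => some (.dconH d)
  | .eq _ _ => some .eqH
  | _ => none

/- The deterministic small-step CBV evaluation relation `m ~>cbv m'`. -/
mutual
inductive Cstep : Exp → Exp → Prop where
  | appbeta : IsVal u → Cstep (.app (.lam b) u) (subst u 0 b)
  | apprec : IsVal u₁ → IsVal u₂ →
      Cstep (.app (.rec' u₁) u₂) (.app (subst (.rec' u₁) 0 u₁) u₂)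
  | iappbeta : Cstep (.iapp (.ilam b)) (subst .join 0 b)
  | iapprec : IsVal u → Cstep (.iapp (.rec' u)) (.iapp (subst (.rec' u) 0 u))
  | casebeta : IsVals as → findBranch d bs = some (ar, b) → expsLength as = ar →
      Cstep (.case' (.dcon d as) bs) (msubst as b)
  | ctxAppL : Cstep a a' → Cstep (.app a b) (.app a' b)
  | ctxAppR : IsVal u → Cstep b b' → Cstep (.app u b) (.app u b')
  | ctxIApp : Cstep a a' → Cstep (.iapp a) (.iapp a')
  | ctxCase : Cstep s s' → Cstep (.case' s bs) (.case' s' bs)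
  | ctxDcon : CstepSpine as as' → Cstep (.dcon d as) (.dcon d as')
  | abortAppL : Cstep (.app .abort b) .abort
  | abortAppR : IsVal u → Cstep (.app u .abort) .abort
  | abortIApp : Cstep (.iapp .abort) .abort
  | abortCase : Cstep (.case' .abort bs) .abort
  | abortDcon : SpineAbort as → Cstep (.dcon d as) .abort

inductive CstepSpine : Exps → Exps → Prop where
  | head : Cstep a a' → CstepSpine (.cons a as) (.cons a' as)
  | tail : IsVal u → CstepSpine as as' → CstepSpine (.cons u as) (.cons u as')
end

/-! Parallel reduction keeps the head of an equality, (implicit) function or datatype type and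
acts on it componentwise, so a common reduct of two instances of one such former is again an
instance of it whose components are common reducts of the corresponding components. -/

end Trellys

namespace Relation

theorem ReflTransGen.simulation {α β : Type*} {s : α → α → Prop} {r : β → β → Prop}
    {R : α → β → Prop} (hsim : ∀ x y a, s x y → R x a → ∃ b, R y b ∧ r a b) {x y : α} {a : β}
    (h : ReflTransGen s x y) (hx : R x a) : ∃ b, R y b ∧ ReflTransGen r a b := by
  induction h with
  | refl => exact ⟨a, hx, .refl⟩
  | tail _ hstep ih =>
    obtain ⟨b, hb, hab⟩ := ih
    obtain ⟨c, hc, hbc⟩ := hsim _ _ b hstep hb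
    exact ⟨c, hc, hab.tail hbc⟩

end Relation

namespace Trellys

open Relation

section Former

variable {α : Type*} {f : α → Exp} {r : α → α → Prop}

theorem pmulti_apply_inv (hinv : ∀ x p, Pstep (f x) p → ∃ x', p = f x' ∧ r x x') {x : α}
    {p : Exp} (h : Pmulti (f x) p) : ∃ x', p = f x' ∧ ReflTransGen r x x' :=
  h.simulation (R := fun p x => p = f x) (fun _ _ x hstep hx => hinv x _ (hx ▸ hstep)) rfl

theorem join_of_joinable_apply (hf : Function.Injective f)
    (hinv : ∀ x p, Pstep (f x) p → ∃ x', p = f x' ∧ r x x') {x y : α}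
    (h : Joinable (f x) (f y)) : Join (ReflTransGen r) x y := by
  obtain ⟨p, hxp, hyp⟩ := h
  obtain ⟨x', rfl, hxx'⟩ := pmulti_apply_inv hinv hxp
  obtain ⟨y', hy', hyy'⟩ := pmulti_apply_inv hinv hyp
  exact ⟨x', hxx', hf hy' ▸ hyy'⟩

end Former

theorem joinable_and_joinable_of_joinable {c : Exp → Exp → Exp} (hc : Function.Injective2 c)
    (hinv : ∀ a b p, Pstep (c a b) p → ∃ a' b', p = c a' b' ∧ Pstep a a' ∧ Pstep b b')
    {m₁ n₁ m₂ n₂ : Exp} (h : Joinable (c m₁ n₁) (c m₂ n₂)) :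
    Joinable m₁ m₂ ∧ Joinable n₁ n₂ := by
  obtain ⟨⟨a, b⟩, h₁, h₂⟩ := join_of_joinable_apply (f := Function.uncurry c)
    (r := fun x y => Pstep x.1 y.1 ∧ Pstep x.2 y.2) (x := (m₁, n₁)) (y := (m₂, n₂)) hc.uncurry
    (fun ⟨a, b⟩ p hp => by
      obtain ⟨a', b', rfl, ha, hb⟩ := hinv a b p hp
      exact ⟨(a', b'), rfl, ha, hb⟩) h
  have fst {x y : Exp × Exp} (h : ReflTransGen (fun x y => Pstep x.1 y.1 ∧ Pstep x.2 y.2) x y) :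
      Pmulti x.1 y.1 :=
    h.lift Prod.fst fun _ _ h => h.1
  have snd {x y : Exp × Exp} (h : ReflTransGen (fun x y => Pstep x.1 y.1 ∧ Pstep x.2 y.2) x y) :
      Pmulti x.2 y.2 :=
    h.lift Prod.snd fun _ _ h => h.2
  exact ⟨⟨a, fst h₁, fst h₂⟩, ⟨b, snd h₁, snd h₂⟩⟩

theorem pstep_eq_inv {a b p : Exp} (h : Pstep (.eq a b) p) :
    ∃ a' b', p = .eq a' b' ∧ Pstep a a' ∧ Pstep b b' := by
  cases h with
  | refl => exact ⟨a, b, rfl, .refl, .refl⟩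
  | eq ha hb => exact ⟨_, _, rfl, ha, hb⟩

theorem pstep_pi_inv {a b p : Exp} (h : Pstep (.pi a b) p) :
    ∃ a' b', p = .pi a' b' ∧ Pstep a a' ∧ Pstep b b' := by
  cases h with
  | refl => exact ⟨a, b, rfl, .refl, .refl⟩
  | pi ha hb => exact ⟨_, _, rfl, ha, hb⟩

theorem pstep_ipi_inv {a b p : Exp} (h : Pstep (.ipi a b) p) :
    ∃ a' b', p = .ipi a' b' ∧ Pstep a a' ∧ Pstep b b' := by
  cases h with
  | refl => exact ⟨a, b, rfl, .refl, .refl⟩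
  | ipi ha hb => exact ⟨_, _, rfl, ha, hb⟩

theorem pstepExps_refl : ∀ as, PstepExps as as
  | .nil => .nil
  | .cons _ as => .cons .refl (pstepExps_refl as)

theorem pstep_tcon_inv {D : Nat} {as : Exps} {p : Exp} (h : Pstep (.tcon D as) p) :
    ∃ as', p = .tcon D as' ∧ PstepExps as as' := by
  cases h with
  | refl => exact ⟨as, rfl, pstepExps_refl as⟩
  | tcon has => exact ⟨_, rfl, has⟩

theorem pstepExps_expsGet {as as' : Exps} (h : PstepExps as as') {i : Nat} {A : Exp}
    (hA : expsGet as i = some A) : ∃ A', expsGet as' i = some A' ∧ Pstep A A' := by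
  induction i generalizing as as' with
  | zero =>
    cases h with
    | nil => cases hA
    | cons ha _ => cases hA; exact ⟨_, rfl, ha⟩
  | succ i ih =>
    cases h with
    | nil => cases hA
    | cons _ has => exact ih has hA

theorem reflTransGen_pstepExps_expsGet {as as' : Exps} (h : ReflTransGen PstepExps as as')
    {i : Nat} {A : Exp} (hA : expsGet as i = some A) : ∃ A', expsGet as' i = some A' ∧ Pmulti A A' :=
  h.simulation (R := fun as A => expsGet as i = some A)
    (fun _ _ _ hstep hA => pstepExps_expsGet hstep hA) hA

theorem joinable_injectivity :
    (∀ m₁ n₁ m₂ n₂ : Exp, Joinable (.eq m₁ n₁) (.eq m₂ n₂) →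
        Joinable m₁ m₂ ∧ Joinable n₁ n₂) ∧
    (∀ M₁ N₁ M₂ N₂ : Exp, Joinable (.pi M₁ N₁) (.pi M₂ N₂) →
        Joinable M₁ M₂ ∧ Joinable N₁ N₂) ∧
    (∀ M₁ N₁ M₂ N₂ : Exp, Joinable (.ipi M₁ N₁) (.ipi M₂ N₂) →
        Joinable M₁ M₂ ∧ Joinable N₁ N₂) ∧
    (∀ (D : Nat) (as₁ as₂ : Exps), Joinable (.tcon D as₁) (.tcon D as₂) →
        ∀ (i : Nat) (A A' : Exp), expsGet as₁ i = some A → expsGet as₂ i = some A' →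
          Joinable A A') := by
  refine ⟨fun _ _ _ _ => joinable_and_joinable_of_joinable (fun _ _ _ _ => Exp.eq.inj)
      fun _ _ _ => pstep_eq_inv,
    fun _ _ _ _ => joinable_and_joinable_of_joinable (fun _ _ _ _ => Exp.pi.inj)
      fun _ _ _ => pstep_pi_inv,
    fun _ _ _ _ => joinable_and_joinable_of_joinable (fun _ _ _ _ => Exp.ipi.inj)
      fun _ _ _ => pstep_ipi_inv, ?_⟩
  intro D as₁ as₂ h i A A' hA hA'
  obtain ⟨cs, h₁, h₂⟩ := join_of_joinable_apply (fun _ _ h => (Exp.tcon.inj h).2)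
    (fun _ _ => pstep_tcon_inv) h
  obtain ⟨C, hC, hAC⟩ := reflTransGen_pstepExps_expsGet h₁ hA
  obtain ⟨C', hC', hAC'⟩ := reflTransGen_pstepExps_expsGet h₂ hA'
  cases hC.symm.trans hC'
  exact ⟨C, hAC, hAC'⟩

end Trellys
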